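/- For every n ∈ ℕ, the number of irreducible meandric systems on 2n bridges equals the number of pairs (π, ρ) ∈ NC(n)² such that π ∨ ρ = 1_n and π ∧ ρ = 0_n in the lattice NC(n). -/

import Mathlib

open scoped Classical

/-- A setoid (partition) of `Fin n` is non-crossing if there is no crossing
`a < b < c < d` with `a ∼ c`, `b ∼ d` but `a` and `b` in distinct blocks. -/
def IsNC {n : ℕ} (S : Setoid (Fin n)) : Prop :=
  ∀ a b c d : Fin n, a < b → b < c → c < d → S.r a c → S.r b d → S.r a b

/-- A partition is a pairing if every block has exactly two elements. -/
def IsPairing {m : ℕ} (T : Setoid (Fin m)) : Prop :=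
  ∀ x : Fin m, ∃ y : Fin m, y ≠ x ∧ T.r x y ∧ ∀ z : Fin m, T.r x z → z = x ∨ z = y

/-- The block of `i` in the partition `S`, as a finset. -/
noncomputable def blockOf {n : ℕ} (S : Setoid (Fin n)) (i : Fin n) : Finset (Fin n) :=
  Finset.univ.filter (fun j => S.r i j)

lemma blockOf_nonempty {n : ℕ} (S : Setoid (Fin n)) (i : Fin n) :
    (blockOf S i).Nonempty :=
  ⟨i, by simp [blockOf, S.iseqv.refl i]⟩

/-- The permutation `P_S` which performs an increasing cycle on every block of `S`:
it sends `i` to the next larger element of its block, or to the minimum of the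
block if `i` is the largest element of its block. -/
noncomputable def nextP {n : ℕ} (S : Setoid (Fin n)) (i : Fin n) : Fin n :=
  if h : ((blockOf S i).filter (fun j => i < j)).Nonempty
  then ((blockOf S i).filter (fun j => i < j)).min' h
  else (blockOf S i).min' (blockOf_nonempty S i)

/-- The inverse permutation `P_S⁻¹` (decreasing cycle on every block of `S`). -/
noncomputable def prevP {n : ℕ} (S : Setoid (Fin n)) (i : Fin n) : Fin n :=
  if h : ((blockOf S i).filter (fun j => j < i)).Nonempty
  then ((blockOf S i).filter (fun j => j < i)).max' h
  else (blockOf S i).max' (blockOf_nonempty S i)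

/-- `0`-indexed version of the point `2i-1` of `{1,…,2n}`. -/
def dEven {n : ℕ} (j : Fin n) : Fin (2*n) := ⟨2*j.val, by have := j.isLt; omega⟩

/-- `0`-indexed version of the point `2i` of `{1,…,2n}`. -/
def dOdd {n : ℕ} (j : Fin n) : Fin (2*n) := ⟨2*j.val+1, by have := j.isLt; omega⟩

/-- The doubling construction `π ↦ A(π)`: the pairing of `{1,…,2n}` generated by
pairing each point `2i` with `2P_π(i) - 1`, so that the associated permutation
satisfies `P_{A(π)}(2i) = 2P_π(i) - 1` and `P_{A(π)}(2i-1) = 2P_π⁻¹(i)`. -/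
noncomputable def archSetoid {n : ℕ} (S : Setoid (Fin n)) : Setoid (Fin (2*n)) :=
  Relation.EqvGen.setoid (fun a b => ∃ j : Fin n, a = dOdd j ∧ b = dEven (nextP S j))

/-- The meandric system permutation `M_{π,ρ} ∈ S_{2n}`, defined by
`M_{π,ρ}(2i-1) = 2P_π⁻¹(i)` and `M_{π,ρ}(2i) = 2P_ρ(i) - 1` (here `0`-indexed). -/
noncomputable def meanderMap {n : ℕ} (π ρ : Setoid (Fin n)) (x : Fin (2*n)) : Fin (2*n) :=
  if x.val % 2 = 0
  then dOdd (prevP π ⟨x.val / 2, by have := x.isLt; omega⟩)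
  else dEven (nextP ρ ⟨x.val / 2, by have := x.isLt; omega⟩)

/-- The orbit partition of a map. -/
def orbitSetoid {m : ℕ} (f : Fin m → Fin m) : Setoid (Fin m) :=
  Relation.EqvGen.setoid (fun a b => f a = b)

/-- Number of orbits of a map. -/
noncomputable def numOrbits {m : ℕ} (f : Fin m → Fin m) : ℕ :=
  Nat.card (Quotient (orbitSetoid f))

/-- `S` is a union of blocks of the partition `T`. -/
def IsBlockUnion {m : ℕ} (T : Setoid (Fin m)) (S : Set (Fin m)) : Prop :=
  ∀ x ∈ S, ∀ y, T.r x y → y ∈ S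

/-- `S` is invariant under `f`. -/
def MInvariant {m : ℕ} (f : Fin m → Fin m) (S : Set (Fin m)) : Prop :=
  ∀ x ∈ S, f x ∈ S

/-- The meandric system `M_{π,ρ}` is reducible: some proper subinterval
`{a,…,b}` of `{1,…,2n}` is invariant under `M_{π,ρ}`. -/
noncomputable def Reducible {n : ℕ} (π ρ : Setoid (Fin n)) : Prop :=
  ∃ a b : Fin (2*n), a ≤ b ∧ b.val - a.val < 2*n - 1 ∧
    MInvariant (meanderMap π ρ) {x | a ≤ x ∧ x ≤ b}

/-- The join in the lattice of non-crossing partitions: the smallest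
non-crossing partition above both `π` and `ρ`. -/
noncomputable def ncJoin {m : ℕ} (π ρ : Setoid (Fin m)) : Setoid (Fin m) :=
  sInf {τ | IsNC τ ∧ π ≤ τ ∧ ρ ≤ τ}

/-- The moment-cumulant formula of free probability: `mom n` is the sum over all
non-crossing partitions of `{1,…,n}` of the products of cumulants `κ` indexed
by the block sizes.  This uniquely determines the free cumulants `κ n`, `n ≥ 1`,
of a sequence of moments. -/
def MomCum {F : Type*} [Field F] (mom κ : ℕ → F) : Prop :=
  ∀ n : ℕ, 0 < n →
    mom n = ∑ᶠ S ∈ {S : Setoid (Fin n) | IsNC S}, ∏ᶠ B ∈ Setoid.classes S, κ B.ncard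

/-- The number of irreducible meandric systems on `2k` bridges, described as the
number of pairs `(π,ρ) ∈ NC(k)²` with `π ∨ ρ = 1_k`, `π ∧ ρ = 0_k`. -/
noncomputable def mirr (k : ℕ) : ℕ :=
  Nat.card {pr : Setoid (Fin k) × Setoid (Fin k) //
    IsNC pr.1 ∧ IsNC pr.2 ∧ ncJoin pr.1 pr.2 = ⊤ ∧ pr.1 ⊓ pr.2 = ⊥}

/-- The number of pairs `(π,ρ) ∈ NC(n)²` whose meandric system `M_{π,ρ}` has
exactly `k` orbits (connected components). -/
noncomputable def mcount (n k : ℕ) : ℕ :=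
  Nat.card {pr : Setoid (Fin n) × Setoid (Fin n) //
    IsNC pr.1 ∧ IsNC pr.2 ∧ numOrbits (meanderMap pr.1 pr.2) = k}

/-- The number of meanders on `2n` bridges. -/
noncomputable def meanderNum (n : ℕ) : ℕ := mcount n 1

/-! `M_{π,ρ}` sends the odd points `2i-1` to even points through `P_π⁻¹` and the even
points `2i` to odd points through `P_ρ`. Hence `[2s-1, 2t]` is invariant iff `[s, t]` is closed
under `P_π⁻¹` and `P_ρ`, i.e. is a union of blocks of both `π` and `ρ`; since the convex hull of
a block of a non-crossing partition is a union of blocks, a proper such interval exists iff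
`π ∨ ρ ≠ 1_n`. Next, `[2s, 2t-1]` is invariant iff `s` and `t` share a block of `π` and a block
of `ρ`, and such `s < t` exist iff `π ∧ ρ ≠ 0_n`. Intervals with endpoints of equal parity are
never invariant. These last two facts rest on one observation: descending along `P_π⁻¹` from `t`
without leaving the interval reaches the least element of the block of `t`, which `P_π⁻¹` sends
to the greatest one, `≥ t`. -/

open Set

section Cycles

variable {n : ℕ} {S : Setoid (Fin n)}

lemma mem_blockOf {i j : Fin n} : j ∈ blockOf S i ↔ S i j := by
  simp [blockOf]

lemma rel_prevP (i : Fin n) : S i (prevP S i) := by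
  unfold prevP
  split_ifs with h
  · exact mem_blockOf.mp (Finset.mem_filter.mp (Finset.max'_mem _ h)).1
  · exact mem_blockOf.mp (Finset.max'_mem _ _)

lemma rel_nextP (i : Fin n) : S i (nextP S i) := by
  unfold nextP
  split_ifs with h
  · exact mem_blockOf.mp (Finset.mem_filter.mp (Finset.min'_mem _ h)).1
  · exact mem_blockOf.mp (Finset.min'_mem _ _)

lemma prevP_mem_Ico_of_rel_of_lt {i l : Fin n} (h : S i l) (hl : l < i) :
    prevP S i ∈ Ico l i := by
  have hmem : l ∈ (blockOf S i).filter (· < i) :=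
    Finset.mem_filter.mpr ⟨mem_blockOf.mpr h, hl⟩
  unfold prevP
  rw [dif_pos ⟨l, hmem⟩]
  exact ⟨Finset.le_max' _ _ hmem, (Finset.mem_filter.mp (Finset.max'_mem _ ⟨l, hmem⟩)).2⟩

lemma nextP_mem_Ioc_of_rel_of_lt {i l : Fin n} (h : S i l) (hl : i < l) :
    nextP S i ∈ Ioc i l := by
  have hmem : l ∈ (blockOf S i).filter (i < ·) :=
    Finset.mem_filter.mpr ⟨mem_blockOf.mpr h, hl⟩
  unfold nextP
  rw [dif_pos ⟨l, hmem⟩]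
  exact ⟨(Finset.mem_filter.mp (Finset.min'_mem _ ⟨l, hmem⟩)).2, Finset.min'_le _ _ hmem⟩

/-- `prevP` sends the least element of a block to its greatest. -/
lemma exists_rel_le_forall_le_prevP (k : Fin n) :
    ∃ m, S k m ∧ m ≤ k ∧ ∀ l, S k l → l ≤ prevP S m := by
  set m := (blockOf S k).min' (blockOf_nonempty S k)
  have hkm : S k m := mem_blockOf.mp (Finset.min'_mem _ _)
  have hmin : ¬ ((blockOf S m).filter (· < m)).Nonempty := by
    rintro ⟨j, hj⟩
    obtain ⟨hj, hjm⟩ := Finset.mem_filter.mp hj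
    exact (Finset.min'_le _ _ (mem_blockOf.mpr (S.trans' hkm (mem_blockOf.mp hj)))).not_gt hjm
  refine ⟨m, hkm, Finset.min'_le _ _ (mem_blockOf.mpr (S.refl' k)), fun l hl => ?_⟩
  unfold prevP
  rw [dif_neg hmin]
  exact Finset.le_max' _ _ (mem_blockOf.mpr (S.trans' (S.symm' hkm) hl))

/-- `nextP` sends the greatest element of a block to its least. -/
lemma exists_rel_le_forall_nextP_le (k : Fin n) :
    ∃ m, S k m ∧ k ≤ m ∧ ∀ l, S k l → nextP S m ≤ l := by
  set m := (blockOf S k).max' (blockOf_nonempty S k)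
  have hkm : S k m := mem_blockOf.mp (Finset.max'_mem _ _)
  have hmax : ¬ ((blockOf S m).filter (m < ·)).Nonempty := by
    rintro ⟨j, hj⟩
    obtain ⟨hj, hmj⟩ := Finset.mem_filter.mp hj
    exact (Finset.le_max' _ _ (mem_blockOf.mpr (S.trans' hkm (mem_blockOf.mp hj)))).not_gt hmj
  refine ⟨m, hkm, Finset.le_max' _ _ (mem_blockOf.mpr (S.refl' k)), fun l hl => ?_⟩
  unfold nextP
  rw [dif_neg hmax]
  exact Finset.min'_le _ _ (mem_blockOf.mpr (S.trans' (S.symm' hkm) hl))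

lemma mem_of_rel_of_le_of_prevP_mem {F : Set (Fin n)}
    (hF : ∀ k ∈ F, prevP S k < k → prevP S k ∈ F) {k l : Fin n} (hk : k ∈ F) (hkl : S k l)
    (hlk : l ≤ k) : l ∈ F := by
  induction k using WellFoundedLT.induction with
  | _ k ih =>
    rcases hlk.eq_or_lt with rfl | hlt
    · exact hk
    · obtain ⟨hl, hk'⟩ := prevP_mem_Ico_of_rel_of_lt hkl hlt
      exact ih _ hk' (hF k hk hk') (S.trans' (S.symm' (rel_prevP k)) hkl) hl

lemma mem_of_rel_of_le_of_nextP_mem {F : Set (Fin n)}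
    (hF : ∀ k ∈ F, k < nextP S k → nextP S k ∈ F) {k l : Fin n} (hk : k ∈ F) (hkl : S k l)
    (hkl' : k ≤ l) : l ∈ F := by
  induction k using WellFoundedGT.induction with
  | _ k ih =>
    rcases hkl'.eq_or_lt with rfl | hlt
    · exact hk
    · obtain ⟨hk', hl⟩ := nextP_mem_Ioc_of_rel_of_lt hkl hlt
      exact ih _ hk' (hF k hk hk') (S.trans' (S.symm' (rel_nextP k)) hkl) hl

lemma isBlockUnion_iff_mapsTo_prevP {F : Set (Fin n)} :
    IsBlockUnion S F ↔ MapsTo (prevP S) F F := by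
  refine ⟨fun h k hk => h k hk _ (rel_prevP k), fun h k hk l hkl => ?_⟩
  have hdesc {k l} (hk : k ∈ F) (hkl : S k l) (hlk : l ≤ k) : l ∈ F :=
    mem_of_rel_of_le_of_prevP_mem (fun k hk _ => h hk) hk hkl hlk
  obtain ⟨m, hkm, hmk, hle⟩ := exists_rel_le_forall_le_prevP (S := S) k
  have hm : m ∈ F := hdesc hk hkm hmk
  exact hdesc (h hm) (S.trans' (S.symm' (rel_prevP m)) (S.trans' (S.symm' hkm) hkl)) (hle l hkl)

lemma isBlockUnion_iff_mapsTo_nextP {F : Set (Fin n)} :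
    IsBlockUnion S F ↔ MapsTo (nextP S) F F := by
  refine ⟨fun h k hk => h k hk _ (rel_nextP k), fun h k hk l hkl => ?_⟩
  have hasc {k l} (hk : k ∈ F) (hkl : S k l) (hkl' : k ≤ l) : l ∈ F :=
    mem_of_rel_of_le_of_nextP_mem (fun k hk _ => h hk) hk hkl hkl'
  obtain ⟨m, hkm, hkm', hle⟩ := exists_rel_le_forall_nextP_le (S := S) k
  have hm : m ∈ F := hasc hk hkm hkm'
  exact hasc (h hm) (S.trans' (S.symm' (rel_nextP m)) (S.trans' (S.symm' hkm) hkl)) (hle l hkl)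

end Cycles

section Intervals

variable {n : ℕ} {S : Setoid (Fin n)}

lemma rel_of_mapsTo_prevP_Ioc_Ico {s t : Fin n} (hst : s ≤ t)
    (h : MapsTo (prevP S) (Ioc s t) (Ico s t)) : S s t := by
  by_contra hst'
  have hlt : s < t := hst.lt_of_ne fun h => hst' (h ▸ S.refl' s)
  set F := Ioc s t ∩ {x | S t x}
  have hF : ∀ k ∈ F, prevP S k < k → prevP S k ∈ F := by
    rintro k ⟨hk, htk⟩ -
    obtain ⟨hs, hkt⟩ := h hk
    have htp : S t (prevP S k) := S.trans' htk (rel_prevP k)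
    exact ⟨⟨hs.lt_of_ne fun he => hst' (S.symm' (he ▸ htp)), hkt.le⟩, htp⟩
  obtain ⟨m, htm, hmt, hle⟩ := exists_rel_le_forall_le_prevP (S := S) t
  have hm := mem_of_rel_of_le_of_prevP_mem hF ⟨⟨hlt, le_rfl⟩, S.refl' t⟩ htm hmt
  exact (h hm.1).2.not_ge (hle t (S.refl' t))

lemma rel_of_mapsTo_nextP_Ico_Ioc {s t : Fin n} (hst : s ≤ t)
    (h : MapsTo (nextP S) (Ico s t) (Ioc s t)) : S s t := by
  by_contra hst'
  have hlt : s < t := hst.lt_of_ne fun h => hst' (h ▸ S.refl' s)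
  set F := Ico s t ∩ {x | S s x}
  have hF : ∀ k ∈ F, k < nextP S k → nextP S k ∈ F := by
    rintro k ⟨hk, hsk⟩ -
    obtain ⟨hsk', ht⟩ := h hk
    have hsp : S s (nextP S k) := S.trans' hsk (rel_nextP k)
    exact ⟨⟨hsk'.le, ht.lt_of_ne fun he => hst' (he ▸ hsp)⟩, hsp⟩
  obtain ⟨m, hsm, hsm', hle⟩ := exists_rel_le_forall_nextP_le (S := S) s
  have hm := mem_of_rel_of_le_of_nextP_mem hF ⟨⟨le_rfl, hlt⟩, S.refl' s⟩ hsm hsm'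
  exact (h hm.1).1.not_ge (hle s (S.refl' s))

lemma not_mapsTo_prevP_Icc_Ico {s t : Fin n} (hst : s ≤ t) :
    ¬ MapsTo (prevP S) (Icc s t) (Ico s t) := by
  intro h
  obtain ⟨m, htm, hmt, hle⟩ := exists_rel_le_forall_le_prevP (S := S) t
  have hm : m ∈ Icc s t := mem_of_rel_of_le_of_prevP_mem
    (fun k hk _ => Ico_subset_Icc_self (h hk)) ⟨hst, le_rfl⟩ htm hmt
  exact (h hm).2.not_ge (hle t (S.refl' t))

lemma not_mapsTo_nextP_Icc_Ioc {s t : Fin n} (hst : s ≤ t) :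
    ¬ MapsTo (nextP S) (Icc s t) (Ioc s t) := by
  intro h
  obtain ⟨m, hsm, hsm', hle⟩ := exists_rel_le_forall_nextP_le (S := S) s
  have hm : m ∈ Icc s t := mem_of_rel_of_le_of_nextP_mem
    (fun k hk _ => Ioc_subset_Icc_self (h hk)) ⟨le_rfl, hst⟩ hsm hsm'
  exact (h hm).1.not_ge (hle s (S.refl' s))

namespace IsNC

variable (hS : IsNC S)
include hS

lemma mem_Ioo_of_rel {i j k l : Fin n} (hij : S i j) (hk : k ∈ Ioo i j) (hik : ¬ S i k)
    (hkl : S k l) : l ∈ Ioo i j := by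
  constructor
  · by_contra! hli
    rcases hli.eq_or_lt with rfl | hli
    · exact hik (S.symm' hkl)
    · exact hik (S.trans' (S.symm' (hS l i k j hli hk.1 hk.2 (S.symm' hkl) hij)) (S.symm' hkl))
  · by_contra! hjl
    rcases hjl.eq_or_lt with rfl | hjl
    · exact hik (S.trans' hij (S.symm' hkl))
    · exact hik (hS i k j l hk.1 hk.2 hjl hij hkl)

lemma isBlockUnion_Icc {x s t : Fin n} (hs : S x s) (ht : S x t)
    (hbound : ∀ l, S x l → l ∈ Icc s t) : IsBlockUnion S (Icc s t) := by
  intro c hc d hcd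
  by_cases hxc : S x c
  · exact hbound d (S.trans' hxc hcd)
  · have hsc : ¬ S s c := fun h => hxc (S.trans' hs h)
    have hc' : c ∈ Ioo s t :=
      ⟨hc.1.lt_of_ne fun h => hsc (h ▸ S.refl' s),
        hc.2.lt_of_ne fun h => hxc (h ▸ ht)⟩
    exact Ioo_subset_Icc_self (hS.mem_Ioo_of_rel (S.trans' (S.symm' hs) ht) hc' hsc hcd)

lemma mapsTo_prevP_Ioc_Ico {i j : Fin n} (hij : S i j) :
    MapsTo (prevP S) (Ioc i j) (Ico i j) := by
  intro k hk
  by_cases hik : S i k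
  · obtain ⟨h1, h2⟩ := prevP_mem_Ico_of_rel_of_lt (S.symm' hik) hk.1
    exact ⟨h1, h2.trans_le hk.2⟩
  · have hk' : k ∈ Ioo i j := ⟨hk.1, hk.2.lt_of_ne fun h => hik (h ▸ hij)⟩
    exact Ioo_subset_Ico_self (hS.mem_Ioo_of_rel hij hk' hik (rel_prevP k))

lemma mapsTo_nextP_Ico_Ioc {i j : Fin n} (hij : S i j) :
    MapsTo (nextP S) (Ico i j) (Ioc i j) := by
  intro k hk
  by_cases hkj : S k j
  · obtain ⟨h1, h2⟩ := nextP_mem_Ioc_of_rel_of_lt hkj hk.2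
    exact ⟨hk.1.trans_lt h1, h2⟩
  · have hik : ¬ S i k := fun h => hkj (S.trans' (S.symm' h) hij)
    have hk' : k ∈ Ioo i j := ⟨hk.1.lt_of_ne fun h => hik (h ▸ S.refl' i), hk.2⟩
    exact Ioo_subset_Ioc_self (hS.mem_Ioo_of_rel hij hk' hik (rel_nextP k))

end IsNC

end Intervals

lemma Setoid.inf_ne_bot_iff {α : Type*} [LinearOrder α] {r s : Setoid α} :
    r ⊓ s ≠ ⊥ ↔ ∃ x y, x < y ∧ r x y ∧ s x y := by
  constructor
  · intro h
    obtain ⟨x, y, hxy, hne⟩ : ∃ x y, (r ⊓ s) x y ∧ x ≠ y := by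
      by_contra! h'
      exact h (Setoid.ext fun x y => ⟨h' x y, fun e => e ▸ (r ⊓ s).refl' x⟩)
    replace hxy := Setoid.inf_iff_and.mp hxy
    rcases hne.lt_or_gt with hlt | hlt
    · exact ⟨x, y, hlt, hxy⟩
    · exact ⟨y, x, hlt, r.symm' hxy.1, s.symm' hxy.2⟩
  · rintro ⟨x, y, hlt, hr, hs⟩ h
    have : (r ⊓ s) x y := Setoid.inf_iff_and.mpr ⟨hr, hs⟩
    rw [h] at this
    exact hlt.ne this

section Join

variable {n : ℕ}

lemma isNC_ker_mem_Icc (s t : Fin n) : IsNC (Setoid.ker (· ∈ Icc s t)) := by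
  intro a b c d hab hbc hcd hac hbd
  simp only [Setoid.ker_def, eq_iff_iff, mem_Icc] at hac hbd ⊢
  constructor
  · intro ha
    exact ⟨ha.1.trans hab.le, hbc.le.trans (hac.mp ha).2⟩
  · intro hb
    have hd := hbd.mp hb
    exact hac.mpr ⟨hb.1.trans hbc.le, hcd.le.trans hd.2⟩

lemma le_ker_mem_of_isBlockUnion {S : Setoid (Fin n)} {F : Set (Fin n)}
    (h : IsBlockUnion S F) : S ≤ Setoid.ker (· ∈ F) := fun x y hxy =>
  propext ⟨fun hx => h x hx y hxy, fun hy => h y hy x (S.symm' hxy)⟩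

lemma IsBlockUnion.mono {S T : Setoid (Fin n)} {F : Set (Fin n)} (h : IsBlockUnion T F)
    (hST : S ≤ T) : IsBlockUnion S F := fun x hx y hxy => h x hx y (hST hxy)

lemma IsNC.exists_isBlockUnion_Icc_ne_univ {τ : Setoid (Fin n)} (hτ : IsNC τ) (h : τ ≠ ⊤) :
    ∃ s t, s ≤ t ∧ Icc s t ≠ univ ∧ IsBlockUnion τ (Icc s t) := by
  obtain ⟨y, x, hyx⟩ : ∃ y x, ¬ τ y x := by
    by_contra! h'
    exact h (Setoid.eq_top_iff.mpr h')
  have hn : 0 < n := y.pos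
  obtain ⟨x, hx⟩ : ∃ x, ¬ τ ⟨0, hn⟩ x := by
    by_contra! h'
    exact hyx (τ.trans' (τ.symm' (h' y)) (h' x))
  set s := (blockOf τ x).min' (blockOf_nonempty τ x)
  set t := (blockOf τ x).max' (blockOf_nonempty τ x)
  have hs : τ x s := mem_blockOf.mp (Finset.min'_mem _ _)
  have hbound : ∀ l, τ x l → l ∈ Icc s t := fun l hl =>
    ⟨Finset.min'_le _ _ (mem_blockOf.mpr hl), Finset.le_max' _ _ (mem_blockOf.mpr hl)⟩
  have hzero : (⟨0, hn⟩ : Fin n) ∉ Icc s t := fun h0 =>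
    hx (le_antisymm h0.1 (Nat.zero_le _) ▸ τ.symm' hs)
  exact ⟨s, t, (hbound x (τ.refl' x)).1.trans (hbound x (τ.refl' x)).2,
    (ne_univ_iff_exists_notMem _).mpr ⟨_, hzero⟩,
    hτ.isBlockUnion_Icc hs (mem_blockOf.mp (Finset.max'_mem _ _)) hbound⟩

lemma ncJoin_ne_top_iff {π ρ : Setoid (Fin n)} :
    ncJoin π ρ ≠ ⊤ ↔ ∃ s t, s ≤ t ∧ Icc s t ≠ univ ∧
      IsBlockUnion π (Icc s t) ∧ IsBlockUnion ρ (Icc s t) := by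
  constructor
  · intro h
    obtain ⟨τ, ⟨hτ, hπτ, hρτ⟩, hτ_ne⟩ : ∃ τ ∈ {τ | IsNC τ ∧ π ≤ τ ∧ ρ ≤ τ}, τ ≠ ⊤ := by
      by_contra! h'
      exact h (sInf_eq_top.mpr h')
    obtain ⟨s, t, hst, hne, hτU⟩ := hτ.exists_isBlockUnion_Icc_ne_univ hτ_ne
    exact ⟨s, t, hst, hne, hτU.mono hπτ, hτU.mono hρτ⟩
  · rintro ⟨s, t, hst, hne, hπ, hρ⟩ htop
    obtain ⟨x, hx⟩ := (ne_univ_iff_exists_notMem _).mp hne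
    have hle : ncJoin π ρ ≤ Setoid.ker (· ∈ Icc s t) :=
      sInf_le ⟨isNC_ker_mem_Icc s t, le_ker_mem_of_isBlockUnion hπ, le_ker_mem_of_isBlockUnion hρ⟩
    have hsx : (s ∈ Icc s t) = (x ∈ Icc s t) := hle (by rw [htop]; trivial)
    exact hx (hsx ▸ ⟨le_rfl, hst⟩)

end Join

section MeanderMap

variable {n : ℕ}

@[simp] lemma dEven_le_dEven {i j : Fin n} : dEven i ≤ dEven j ↔ i ≤ j := by
  simp only [Fin.le_def, dEven]; omega

@[simp] lemma dOdd_le_dOdd {i j : Fin n} : dOdd i ≤ dOdd j ↔ i ≤ j := by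
  simp only [Fin.le_def, dOdd]; omega

@[simp] lemma dEven_le_dOdd {i j : Fin n} : dEven i ≤ dOdd j ↔ i ≤ j := by
  simp only [Fin.le_def, dEven, dOdd]; omega

@[simp] lemma dOdd_le_dEven {i j : Fin n} : dOdd i ≤ dEven j ↔ i < j := by
  simp only [Fin.le_def, Fin.lt_def, dEven, dOdd]; omega

lemma exists_eq_dEven_or_dOdd (x : Fin (2 * n)) : ∃ k, x = dEven k ∨ x = dOdd k :=
  ⟨⟨x / 2, by omega⟩, by
    rcases Nat.even_or_odd' x with ⟨k, hk | hk⟩ <;> simp [Fin.ext_iff, dEven, dOdd] <;> omega⟩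

lemma Icc_dEven_dOdd_eq_univ_iff {s t : Fin n} :
    Icc (dEven s) (dOdd t) = univ ↔ Icc s t = univ := by
  simp only [eq_univ_iff_forall, mem_Icc]
  constructor
  · intro h k
    simpa using h (dEven k)
  · intro h x
    obtain ⟨k, rfl | rfl⟩ := exists_eq_dEven_or_dOdd x <;> simpa using h k

lemma Icc_dOdd_ne_univ {s : Fin n} {b : Fin (2 * n)} : Icc (dOdd s) b ≠ univ := by
  intro h
  have : dOdd s ≤ dEven s := (h ▸ mem_univ (dEven s) : dEven s ∈ Icc (dOdd s) b).1
  simp at this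

variable (π ρ : Setoid (Fin n))

lemma meanderMap_dEven (k : Fin n) : meanderMap π ρ (dEven k) = dOdd (prevP π k) := by
  have h : (dEven k).val % 2 = 0 := Nat.mul_mod_right 2 k
  rw [meanderMap, if_pos h]
  congr 2
  exact Fin.ext (Nat.mul_div_cancel_left _ two_pos)

lemma meanderMap_dOdd (k : Fin n) : meanderMap π ρ (dOdd k) = dEven (nextP ρ k) := by
  have h : (dOdd k).val % 2 ≠ 0 := by simp [dOdd]
  rw [meanderMap, if_neg h]
  congr 2
  exact Fin.ext (by show (2 * k.val + 1) / 2 = k.val; omega)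

end MeanderMap

section MeanderIntervals

variable {n : ℕ} (π ρ : Setoid (Fin n))

lemma mapsTo_meanderMap_iff {X : Set (Fin (2 * n))} :
    MapsTo (meanderMap π ρ) X X ↔
      (∀ k, dEven k ∈ X → dOdd (prevP π k) ∈ X) ∧ (∀ k, dOdd k ∈ X → dEven (nextP ρ k) ∈ X) := by
  refine ⟨fun h => ⟨fun k hk => meanderMap_dEven π ρ k ▸ h hk,
    fun k hk => meanderMap_dOdd π ρ k ▸ h hk⟩, fun ⟨hEven, hOdd⟩ x hx => ?_⟩
  obtain ⟨k, rfl | rfl⟩ := exists_eq_dEven_or_dOdd x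
  · exact (meanderMap_dEven π ρ k).symm ▸ hEven k hx
  · exact (meanderMap_dOdd π ρ k).symm ▸ hOdd k hx

variable {π ρ} {s t : Fin n}

lemma mapsTo_meanderMap_Icc_dEven_dOdd_iff :
    MapsTo (meanderMap π ρ) (Icc (dEven s) (dOdd t)) (Icc (dEven s) (dOdd t)) ↔
      MapsTo (prevP π) (Icc s t) (Icc s t) ∧ MapsTo (nextP ρ) (Icc s t) (Icc s t) := by
  rw [mapsTo_meanderMap_iff]
  simp [MapsTo]

lemma mapsTo_meanderMap_Icc_dOdd_dEven_iff :
    MapsTo (meanderMap π ρ) (Icc (dOdd s) (dEven t)) (Icc (dOdd s) (dEven t)) ↔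
      MapsTo (prevP π) (Ioc s t) (Ico s t) ∧ MapsTo (nextP ρ) (Ico s t) (Ioc s t) := by
  rw [mapsTo_meanderMap_iff]
  simp [MapsTo]

lemma mapsTo_prevP_of_mapsTo_meanderMap_Icc_dEven_dEven
    (h : MapsTo (meanderMap π ρ) (Icc (dEven s) (dEven t)) (Icc (dEven s) (dEven t))) :
    MapsTo (prevP π) (Icc s t) (Ico s t) := by
  simpa [MapsTo] using ((mapsTo_meanderMap_iff π ρ).mp h).1

lemma mapsTo_nextP_of_mapsTo_meanderMap_Icc_dOdd_dOdd
    (h : MapsTo (meanderMap π ρ) (Icc (dOdd s) (dOdd t)) (Icc (dOdd s) (dOdd t))) :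
    MapsTo (nextP ρ) (Icc s t) (Ioc s t) := by
  simpa [MapsTo] using ((mapsTo_meanderMap_iff π ρ).mp h).2

end MeanderIntervals

lemma Fin.val_sub_val_lt_iff_Icc_ne_univ {m : ℕ} {a b : Fin m} :
    b.val - a.val < m - 1 ↔ Icc a b ≠ univ := by
  rw [ne_univ_iff_exists_notMem]
  simp only [mem_Icc, not_and_or, not_le, Fin.lt_def]
  constructor
  · intro h
    by_cases ha : 0 < a.val
    · exact ⟨⟨0, by omega⟩, Or.inl ha⟩
    · exact ⟨⟨m - 1, by omega⟩, Or.inr (by simp only; omega)⟩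
  · rintro ⟨x, hx | hx⟩ <;> omega

section Main

variable {n : ℕ} {π ρ : Setoid (Fin n)}

lemma reducible_iff_exists_Icc : Reducible π ρ ↔
    ∃ a b, a ≤ b ∧ Icc a b ≠ univ ∧ MapsTo (meanderMap π ρ) (Icc a b) (Icc a b) := by
  simp only [Reducible, Fin.val_sub_val_lt_iff_Icc_ne_univ]
  rfl

theorem reducible_iff_ncJoin_ne_top_or_inf_ne_bot (hπ : IsNC π) (hρ : IsNC ρ) :
    Reducible π ρ ↔ ncJoin π ρ ≠ ⊤ ∨ π ⊓ ρ ≠ ⊥ := by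
  rw [reducible_iff_exists_Icc, ncJoin_ne_top_iff, Setoid.inf_ne_bot_iff]
  constructor
  · rintro ⟨a, b, hab, hne, hM⟩
    obtain ⟨s, rfl | rfl⟩ := exists_eq_dEven_or_dOdd a <;>
      obtain ⟨t, rfl | rfl⟩ := exists_eq_dEven_or_dOdd b
    · exact (not_mapsTo_prevP_Icc_Ico (dEven_le_dEven.mp hab)
        (mapsTo_prevP_of_mapsTo_meanderMap_Icc_dEven_dEven hM)).elim
    · obtain ⟨hprev, hnext⟩ := mapsTo_meanderMap_Icc_dEven_dOdd_iff.mp hM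
      exact Or.inl ⟨s, t, dEven_le_dOdd.mp hab, Icc_dEven_dOdd_eq_univ_iff.not.mp hne,
        isBlockUnion_iff_mapsTo_prevP.mpr hprev, isBlockUnion_iff_mapsTo_nextP.mpr hnext⟩
    · obtain ⟨hprev, hnext⟩ := mapsTo_meanderMap_Icc_dOdd_dEven_iff.mp hM
      have hst : s < t := dOdd_le_dEven.mp hab
      exact Or.inr ⟨s, t, hst, rel_of_mapsTo_prevP_Ioc_Ico hst.le hprev,
        rel_of_mapsTo_nextP_Ico_Ioc hst.le hnext⟩
    · exact (not_mapsTo_nextP_Icc_Ioc (dOdd_le_dOdd.mp hab)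
        (mapsTo_nextP_of_mapsTo_meanderMap_Icc_dOdd_dOdd hM)).elim
  · rintro (⟨s, t, hst, hne, hπU, hρU⟩ | ⟨s, t, hst, hπst, hρst⟩)
    · exact ⟨dEven s, dOdd t, dEven_le_dOdd.mpr hst, Icc_dEven_dOdd_eq_univ_iff.not.mpr hne,
        mapsTo_meanderMap_Icc_dEven_dOdd_iff.mpr
          ⟨isBlockUnion_iff_mapsTo_prevP.mp hπU, isBlockUnion_iff_mapsTo_nextP.mp hρU⟩⟩
    · exact ⟨dOdd s, dEven t, dOdd_le_dEven.mpr hst, Icc_dOdd_ne_univ,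
        mapsTo_meanderMap_Icc_dOdd_dEven_iff.mpr
          ⟨hπ.mapsTo_prevP_Ioc_Ico hπst, hρ.mapsTo_nextP_Ico_Ioc hρst⟩⟩

end Main

/-- The number of irreducible meandric systems on `2n` bridges equals the number
of pairs `(π,ρ) ∈ NC(n)²` with `π ∨ ρ = 1_n` and `π ∧ ρ = 0_n`. -/
theorem card_irreducible_meandric_systems (n : ℕ) :
    Nat.card {pr : Setoid (Fin n) × Setoid (Fin n) //
        IsNC pr.1 ∧ IsNC pr.2 ∧ ¬ Reducible pr.1 pr.2}
      = Nat.card {pr : Setoid (Fin n) × Setoid (Fin n) //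
        IsNC pr.1 ∧ IsNC pr.2 ∧ ncJoin pr.1 pr.2 = ⊤ ∧ pr.1 ⊓ pr.2 = ⊥} :=
  Nat.card_congr <| Equiv.subtypeEquivRight fun _ =>
    and_congr_right fun hπ => and_congr_right fun hρ => by
      rw [reducible_iff_ncJoin_ne_top_or_inf_ne_bot hπ hρ, not_or, not_not, not_not]
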